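/- Let σ, σ0, τ0 > 0, z ≥ 0, N a positive integer, and b > 0. Define R_b(β) = E_{τ ~ N(τ0, σ0²)}[τ · Φ((Nτ + τ0β)/(√N σ b) − z)], where Φ is the standard normal CDF. Then the unique maximizer of R_b over β ∈ [0, ∞) is β*(b) = σ²b²/σ0² + √N z σ b/τ0, and R_b(β*(b)) ≥ R_b(0). -/

import Mathlib

open Real MeasureTheory

/-- Standard normal CDF. -/
noncomputable def Phi (x : ℝ) : ℝ :=
  ∫ t in Set.Iic x, (Real.sqrt (2 * Real.pi))⁻¹ * Real.exp (-t ^ 2 / 2)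

/-- Density of a normal distribution with mean `μ` and variance `v`. -/
noncomputable def gpdf (μ v x : ℝ) : ℝ :=
  (Real.sqrt (2 * Real.pi * v))⁻¹ * Real.exp (-(x - μ) ^ 2 / (2 * v))

/-! Write the argument of `Phi` as `k τ + q β - z` with `k = N / (√N σ b)`, `q = τ0 / (√N σ b)`.
Differentiating under the integral and completing the square in the Gaussian prior times the
Gaussian likelihood gives `R'(β) = q · φ(k τ0 + q β - z) · m(β)`, where `φ` is the marginal density
of the signal and `m(β) = (τ0 - k (q β - z) σ0²) / (1 + k² σ0²)` is the posterior mean of `τ`.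
Since `m` is affine, strictly decreasing and vanishes exactly at `β*`, `R'` has the sign of
`β* - β`, so `β*` is the strict global maximiser of `R`. -/

open ProbabilityTheory

lemma gpdf_nonneg (μ v x : ℝ) : 0 ≤ gpdf μ v x := by
  unfold gpdf; positivity

lemma gpdf_pos (μ : ℝ) {v : ℝ} (hv : 0 < v) (x : ℝ) : 0 < gpdf μ v x := by
  unfold gpdf; positivity

lemma continuous_gpdf (μ v : ℝ) : Continuous (gpdf μ v) := by
  unfold gpdf; fun_prop

lemma gpdf_eq_gaussianPDFReal (μ : ℝ) {v : ℝ} (hv : 0 ≤ v) :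
    gpdf μ v = gaussianPDFReal μ v.toNNReal := by
  funext x
  simp [gpdf, gaussianPDFReal, Real.coe_toNNReal v hv]

lemma integrable_gpdf (μ : ℝ) {v : ℝ} (hv : 0 ≤ v) : Integrable (gpdf μ v) := by
  rw [gpdf_eq_gaussianPDFReal μ hv]
  exact integrable_gaussianPDFReal μ v.toNNReal

lemma integral_gpdf (μ : ℝ) {v : ℝ} (hv : 0 < v) : ∫ x, gpdf μ v x = 1 := by
  rw [gpdf_eq_gaussianPDFReal μ hv.le]
  exact integral_gaussianPDFReal_eq_one μ (Real.toNNReal_pos.mpr hv).ne'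

lemma integrable_id_mul_gpdf (μ : ℝ) {v : ℝ} (hv : 0 < v) :
    Integrable (fun x => x * gpdf μ v x) := by
  have hv' : v.toNNReal ≠ 0 := (Real.toNNReal_pos.mpr hv).ne'
  have h := (memLp_id_gaussianReal (μ := μ) (v := v.toNNReal) 1).integrable le_rfl
  rw [gaussianReal_of_var_ne_zero μ hv', integrable_withDensity_iff_integrable_smul'
    (measurable_gaussianPDF μ _) (ae_of_all _ fun _ => gaussianPDF_lt_top)] at h
  simpa [gpdf_eq_gaussianPDFReal μ hv.le, toReal_gaussianPDF, mul_comm] using h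

lemma integral_id_mul_gpdf (μ : ℝ) {v : ℝ} (hv : 0 < v) :
    ∫ x, x * gpdf μ v x = μ := by
  have h := integral_gaussianReal_eq_integral_smul (μ := μ) (f := fun x => x)
    (Real.toNNReal_pos.mpr hv).ne'
  rw [integral_id_gaussianReal] at h
  simpa [gpdf_eq_gaussianPDFReal μ hv.le, mul_comm] using h.symm

lemma gpdf_zero_one_le (x : ℝ) : gpdf 0 1 x ≤ (√(2 * π))⁻¹ := by
  have : Real.exp (-(x - 0) ^ 2 / (2 * 1)) ≤ 1 := Real.exp_le_one_iff.mpr (by nlinarith)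
  unfold gpdf
  rw [mul_one]
  exact mul_le_of_le_one_right (by positivity) this

/-- Completing the square: prior density times likelihood equals posterior density times
marginal density. -/
lemma gpdf_mul_gpdf_affine (μ₀ k m : ℝ) {v : ℝ} (hv : 0 < v) (τ : ℝ) :
    gpdf μ₀ v τ * gpdf 0 1 (k * τ + m) =
      gpdf ((μ₀ - k * m * v) / (1 + k ^ 2 * v)) (v / (1 + k ^ 2 * v)) τ *
        gpdf 0 (1 + k ^ 2 * v) (k * μ₀ + m) := by
  have hV : 0 < 1 + k ^ 2 * v := by positivity
  have hpref : (√(2 * π * v))⁻¹ * (√(2 * π * 1))⁻¹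
      = (√(2 * π * (v / (1 + k ^ 2 * v))))⁻¹ * (√(2 * π * (1 + k ^ 2 * v)))⁻¹ := by
    rw [← mul_inv, ← mul_inv, ← Real.sqrt_mul (by positivity), ← Real.sqrt_mul (by positivity)]
    congr 2
    field_simp
  have hexp : -(τ - μ₀) ^ 2 / (2 * v) + -(k * τ + m - 0) ^ 2 / (2 * 1)
      = -(τ - (μ₀ - k * m * v) / (1 + k ^ 2 * v)) ^ 2 / (2 * (v / (1 + k ^ 2 * v)))
        + -(k * μ₀ + m - 0) ^ 2 / (2 * (1 + k ^ 2 * v)) := by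
    field_simp
    ring
  unfold gpdf
  calc _ = ((√(2 * π * v))⁻¹ * (√(2 * π * 1))⁻¹) *
        Real.exp (-(τ - μ₀) ^ 2 / (2 * v) + -(k * τ + m - 0) ^ 2 / (2 * 1)) := by
          rw [Real.exp_add]; ring
    _ = _ := by rw [hpref, hexp, Real.exp_add]; ring

lemma integral_mul_id_mul_gpdf_affine (μ₀ k m : ℝ) {v : ℝ} (hv : 0 < v) :
    ∫ τ, gpdf μ₀ v τ * (τ * gpdf 0 1 (k * τ + m)) =
      gpdf 0 (1 + k ^ 2 * v) (k * μ₀ + m) * ((μ₀ - k * m * v) / (1 + k ^ 2 * v)) := by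
  have hv' : 0 < v / (1 + k ^ 2 * v) := by positivity
  have h : ∀ τ, gpdf μ₀ v τ * (τ * gpdf 0 1 (k * τ + m)) = gpdf 0 (1 + k ^ 2 * v) (k * μ₀ + m) *
      (τ * gpdf ((μ₀ - k * m * v) / (1 + k ^ 2 * v)) (v / (1 + k ^ 2 * v)) τ) := fun τ => by
    linear_combination τ * gpdf_mul_gpdf_affine μ₀ k m hv τ
  simp_rw [h, integral_const_mul, integral_id_mul_gpdf _ hv']

lemma Phi_eq_setIntegral_gpdf (x : ℝ) : Phi x = ∫ t in Set.Iic x, gpdf 0 1 t := by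
  simp [Phi, gpdf]

lemma Phi_nonneg (x : ℝ) : 0 ≤ Phi x := by
  rw [Phi_eq_setIntegral_gpdf]
  exact setIntegral_nonneg measurableSet_Iic fun t _ => gpdf_nonneg 0 1 t

lemma Phi_le_one (x : ℝ) : Phi x ≤ 1 := by
  rw [Phi_eq_setIntegral_gpdf]
  exact (setIntegral_le_integral (integrable_gpdf 0 zero_le_one)
    (ae_of_all _ (gpdf_nonneg 0 1))).trans (integral_gpdf 0 one_pos).le

lemma hasDerivAt_Phi (x : ℝ) : HasDerivAt Phi (gpdf 0 1 x) x := by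
  have hint : Integrable (gpdf 0 1) := integrable_gpdf 0 zero_le_one
  have hPhi : Phi = fun y => (∫ t in Set.Iic 0, gpdf 0 1 t) + ∫ t in (0 : ℝ)..y, gpdf 0 1 t := by
    funext y
    rw [Phi_eq_setIntegral_gpdf, ← intervalIntegral.integral_Iic_sub_Iic hint.integrableOn
      hint.integrableOn, add_sub_cancel]
  rw [hPhi]
  exact (intervalIntegral.integral_hasDerivAt_right hint.intervalIntegrable
    ((continuous_gpdf 0 1).stronglyMeasurableAtFilter _ _)
    (continuous_gpdf 0 1).continuousAt).const_add _

lemma continuous_Phi : Continuous Phi :=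
  continuous_iff_continuousAt.mpr fun x => (hasDerivAt_Phi x).continuousAt

section Derivative

variable (μ₀ k q z : ℝ) {v : ℝ}

lemma hasDerivAt_mul_Phi_affine (τ β : ℝ) :
    HasDerivAt (fun β => gpdf μ₀ v τ * (τ * Phi (k * τ + q * β - z)))
      (gpdf μ₀ v τ * (τ * (gpdf 0 1 (k * τ + q * β - z) * q))) β := by
  have haff : HasDerivAt (fun β => k * τ + q * β - z) q β := by
    simpa using ((hasDerivAt_id β).const_mul q |>.const_add (k * τ)).sub_const z
  exact (((hasDerivAt_Phi _).comp β haff).const_mul τ).const_mul _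

lemma norm_gpdf_mul_mul_Phi_le (τ x : ℝ) :
    ‖gpdf μ₀ v τ * (τ * Phi x)‖ ≤ |τ * gpdf μ₀ v τ| := by
  rw [Real.norm_eq_abs, abs_mul, abs_mul, abs_mul, abs_of_nonneg (Phi_nonneg x),
    abs_of_nonneg (gpdf_nonneg μ₀ v τ)]
  have := mul_le_mul_of_nonneg_left (Phi_le_one x)
    (mul_nonneg (abs_nonneg τ) (gpdf_nonneg μ₀ v τ))
  linarith

lemma norm_gpdf_mul_mul_gpdf_le (τ x : ℝ) :
    ‖gpdf μ₀ v τ * (τ * (gpdf 0 1 x * q))‖ ≤ |τ * gpdf μ₀ v τ| * ((√(2 * π))⁻¹ * |q|) := by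
  rw [Real.norm_eq_abs, abs_mul, abs_mul, abs_mul, abs_mul,
    abs_of_nonneg (gpdf_nonneg 0 1 x), abs_of_nonneg (gpdf_nonneg μ₀ v τ)]
  have := mul_le_mul_of_nonneg_right (gpdf_zero_one_le x) (abs_nonneg q)
  calc _ = |τ| * gpdf μ₀ v τ * (gpdf 0 1 x * |q|) := by ring
    _ ≤ _ := mul_le_mul_of_nonneg_left this (mul_nonneg (abs_nonneg τ) (gpdf_nonneg μ₀ v τ))

lemma hasDerivAt_integral_gpdf_mul_mul_Phi (hv : 0 < v) (β : ℝ) :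
    HasDerivAt (fun β => ∫ τ, gpdf μ₀ v τ * (τ * Phi (k * τ + q * β - z)))
      (q * gpdf 0 (1 + k ^ 2 * v) (k * μ₀ + q * β - z) *
        ((μ₀ - k * (q * β - z) * v) / (1 + k ^ 2 * v))) β := by
  have hint : Integrable (fun τ => τ * gpdf μ₀ v τ) := integrable_id_mul_gpdf μ₀ hv
  have hmeas : ∀ β, AEStronglyMeasurable (fun τ => gpdf μ₀ v τ * (τ * Phi (k * τ + q * β - z))) :=
    fun β => by have := continuous_Phi; unfold gpdf; fun_prop
  have hmeas' : AEStronglyMeasurable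
      (fun τ => gpdf μ₀ v τ * (τ * (gpdf 0 1 (k * τ + q * β - z) * q))) := by
    unfold gpdf; fun_prop
  have key := hasDerivAt_integral_of_dominated_loc_of_deriv_le (x₀ := β) Filter.univ_mem
    (Filter.Eventually.of_forall hmeas)
    (hint.abs.mono' (hmeas β) (ae_of_all _ fun τ => norm_gpdf_mul_mul_Phi_le μ₀ τ _))
    hmeas' (ae_of_all _ fun τ β _ => norm_gpdf_mul_mul_gpdf_le μ₀ q τ _)
    (hint.abs.mul_const _) (ae_of_all _ fun τ β _ => hasDerivAt_mul_Phi_affine μ₀ k q z τ β)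
  refine key.2.congr_deriv ?_
  have h := integral_mul_id_mul_gpdf_affine μ₀ k (q * β - z) hv
  simp only [← add_sub_assoc] at h
  simp only [← mul_assoc _ _ q, integral_mul_const, h]
  ring

end Derivative

lemma lt_of_hasDerivAt_pos_mul_sub {f g : ℝ → ℝ} {c : ℝ}
    (hf : ∀ x, HasDerivAt f (g x * (c - x)) x) (hg : ∀ x, 0 < g x) {x : ℝ} (hx : x ≠ c) :
    f x < f c := by
  have hcont : Continuous f := continuous_iff_continuousAt.mpr fun x => (hf x).continuousAt
  rcases hx.lt_or_gt with hlt | hgt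
  · refine strictMonoOn_of_deriv_pos (convex_Iic c) hcont.continuousOn (fun y hy => ?_)
      hlt.le Set.self_mem_Iic hlt
    rw [interior_Iic] at hy
    rw [(hf y).deriv]
    exact mul_pos (hg y) (sub_pos.mpr hy)
  · refine strictAntiOn_of_deriv_neg (convex_Ici c) hcont.continuousOn (fun y hy => ?_)
      Set.self_mem_Ici hgt.le hgt
    rw [interior_Ici] at hy
    rw [(hf y).deriv]
    exact mul_neg_of_pos_of_neg (hg y) (sub_neg.mpr hy)

theorem stmt_15_general (σ σ0 τ0 z : ℝ) (hσ : 0 < σ) (hσ0 : 0 < σ0) (hτ0 : 0 < τ0)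
    (N : ℕ) (hN : 0 < N) (b : ℝ) (hb : 0 < b)
    (R : ℝ → ℝ)
    (hR : R = fun β => ∫ τ : ℝ, gpdf τ0 (σ0 ^ 2) τ *
      (τ * Phi ((N * τ + τ0 * β) / (Real.sqrt N * σ * b) - z)))
    (βstar : ℝ) (hβstar : βstar = σ ^ 2 * b ^ 2 / σ0 ^ 2 + Real.sqrt N * z * σ * b / τ0) :
    (∀ β : ℝ, 0 ≤ β → R β ≤ R βstar) ∧
      (∀ β : ℝ, 0 ≤ β → β ≠ βstar → R β < R βstar) ∧
      R 0 ≤ R βstar := by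
  have hNpos : (0 : ℝ) < N := Nat.cast_pos.mpr hN
  have hsqrtN : √(N : ℝ) ^ 2 = N := Real.sq_sqrt hNpos.le
  have ha : 0 < √(N : ℝ) * σ * b := by positivity
  set k := (N : ℝ) / (√N * σ * b)
  set q := τ0 / (√N * σ * b)
  have hRaff : R = fun β => ∫ τ, gpdf τ0 (σ0 ^ 2) τ * (τ * Phi (k * τ + q * β - z)) := by
    rw [hR]
    congr! 6 with β τ
    ring
  have hlin : ∀ β, τ0 - k * (q * β - z) * σ0 ^ 2 = k * q * σ0 ^ 2 * (βstar - β) := by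
    intro β
    simp only [k, q, hβstar]
    field_simp
    rw [hsqrtN]
    ring
  have hderiv : ∀ β, HasDerivAt R (q * gpdf 0 (1 + k ^ 2 * σ0 ^ 2) (k * τ0 + q * β - z) *
      (k * q * σ0 ^ 2 / (1 + k ^ 2 * σ0 ^ 2)) * (βstar - β)) β := by
    intro β
    rw [hRaff]
    refine (hasDerivAt_integral_gpdf_mul_mul_Phi τ0 k q z (by positivity) β).congr_deriv ?_
    rw [hlin]
    ring
  have hmax : ∀ β, β ≠ βstar → R β < R βstar := fun β =>
    lt_of_hasDerivAt_pos_mul_sub hderiv fun β => by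
      have := gpdf_pos 0 (by positivity : 0 < 1 + k ^ 2 * σ0 ^ 2) (k * τ0 + q * β - z)
      positivity
  have hle : ∀ β, R β ≤ R βstar := fun β =>
    (eq_or_ne β βstar).elim (fun h => h ▸ le_rfl) fun h => (hmax β h).le
  exact ⟨fun β _ => hle β, fun β _ => hmax β, hle 0⟩

theorem stmt_15 (σ σ0 τ0 z : ℝ) (hσ : 0 < σ) (hσ0 : 0 < σ0) (hτ0 : 0 < τ0)
    (hz : 0 ≤ z) (N : ℕ) (hN : 0 < N) (b : ℝ) (hb : 0 < b)
    (R : ℝ → ℝ)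
    (hR : R = fun β => ∫ τ : ℝ, gpdf τ0 (σ0 ^ 2) τ *
      (τ * Phi ((N * τ + τ0 * β) / (Real.sqrt N * σ * b) - z)))
    (βstar : ℝ) (hβstar : βstar = σ ^ 2 * b ^ 2 / σ0 ^ 2 + Real.sqrt N * z * σ * b / τ0) :
    (∀ β : ℝ, 0 ≤ β → R β ≤ R βstar) ∧
      (∀ β : ℝ, 0 ≤ β → β ≠ βstar → R β < R βstar) ∧
      R 0 ≤ R βstar :=
  stmt_15_general σ σ0 τ0 z hσ hσ0 hτ0 N hN b hb R hR βstar hβstar
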